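/- Let n, r be naturals with 1 ≤ r < n, for i = 1,…,n let F_i : ℝ^p → ℝ be twice continuously differentiable with μ‖v‖² ≤ ⟨v, ∇²F_i(x) v⟩ ≤ L‖v‖² for all x, v (0 < μ ≤ L) and with x ↦ ∇²F_i(x) c₀-Lipschitz in operator norm; set F = (1/n)Σ F_i. Let R ⊆ {1,…,n}, |R| = r, 0 < η ≤ 2/(L+μ), and define three sequences from a common initialization w₀ = u₀ = i₀: w_{t+1} = w_t − η∇F(w_t); u_{t+1} = u_t − (η/(n−r)) Σ_{i∉R} ∇F_i(u_t); i_{t+1} = i_t − (η/(n−r))·[ n·(B_t(i_t − w_t) + ∇F(w_t)) − Σ_{i∈R} ∇F_i(i_t) ], where each B_t is symmetric with ‖B_t − H̄_t‖ ≤ ξ and H̄_t = ∫₀¹ ∇²F(w_t + x(i_t − w_t)) dx. Assume ‖∇F_i(u_t)‖ ≤ c₂ for all i and t, set M₁ = 2c₂/μ, and suppose C := μ − (n/(n−r))·ξ − c₀M₁r/(2n) satisfies 0 < ηC < 1. Then for every t, ‖i_t − u_t‖ ≤ M₁ · r · ξ / (C·(n−r)). -/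

import Mathlib

open scoped RealInnerProductSpace

section AuxDeltaGrad
open InnerProductSpace MeasureTheory
variable {E : Type*} [NormedAddCommGroup E] [InnerProductSpace ℝ E] [CompleteSpace E]

private lemma aux_grad_cd1 {f : E → ℝ} (hf : ContDiff ℝ 2 f) : ContDiff ℝ 1 (gradient f) := by
  have h : gradient f = fun x => (toDual ℝ E).symm (fderiv ℝ f x) := rfl
  rw [h]
  exact (toDual ℝ E).symm.contDiff.comp (hf.fderiv_right (by norm_num))

private lemma aux_fderiv_grad {f : E → ℝ} (hf : ContDiff ℝ 2 f) (x v : E) :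
    fderiv ℝ (gradient f) x v = (toDual ℝ E).symm (fderiv ℝ (fderiv ℝ f) x v) := by
  have h : gradient f = ⇑(toDual ℝ E).symm ∘ fderiv ℝ f := rfl
  rw [h, LinearIsometryEquiv.comp_fderiv]
  rfl

private lemma aux_hess_symm {f : E → ℝ} (hf : ContDiff ℝ 2 f) (x u v : E) :
    ⟪fderiv ℝ (gradient f) x u, v⟫ = ⟪u, fderiv ℝ (gradient f) x v⟫ := by
  rw [aux_fderiv_grad hf, aux_fderiv_grad hf, toDual_symm_apply,
    real_inner_comm, toDual_symm_apply]
  exact (hf.contDiffAt.isSymmSndFDerivAt (by norm_num)).eq u v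

private lemma aux_int_apply {φ : ℝ → E →L[ℝ] E} (hφ : Continuous φ) (v : E) :
    (∫ s in (0:ℝ)..1, φ s) v = ∫ s in (0:ℝ)..1, φ s v := by
  rw [intervalIntegral, intervalIntegral, ContinuousLinearMap.sub_apply,
    ContinuousLinearMap.integral_apply (hφ.integrableOn_Ioc).integrable,
    ContinuousLinearMap.integral_apply (hφ.integrableOn_Ioc).integrable]

private lemma aux_inner_int {g : ℝ → E} (hg : Continuous g) (u : E) :
    ⟪u, ∫ s in (0:ℝ)..1, g s⟫ = ∫ s in (0:ℝ)..1, ⟪u, g s⟫ := by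
  exact ((innerSL ℝ u).intervalIntegral_comp_comm
    (hg.intervalIntegrable 0 1)).symm

private lemma aux_hess_cont {f : E → ℝ} (hf : ContDiff ℝ 2 f) :
    Continuous (fun x => fderiv ℝ (gradient f) x) :=
  (aux_grad_cd1 hf).continuous_fderiv (by norm_num)

private lemma aux_line_cont (a b : E) : Continuous (fun s : ℝ => a + s • (b - a)) := by
  continuity

private lemma aux_ftc {f : E → ℝ} (hf : ContDiff ℝ 2 f) (a b : E) :
    (∫ s in (0:ℝ)..1, fderiv ℝ (gradient f) (a + s • (b - a))) (b - a)
      = gradient f b - gradient f a := by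
  have hH := aux_hess_cont hf
  have hcont : Continuous (fun s : ℝ => fderiv ℝ (gradient f) (a + s • (b - a))) :=
    hH.comp (aux_line_cont a b)
  rw [aux_int_apply hcont]
  have hderiv : ∀ s ∈ Set.uIcc (0:ℝ) 1,
      HasDerivAt (fun s : ℝ => gradient f (a + s • (b - a)))
        (fderiv ℝ (gradient f) (a + s • (b - a)) (b - a)) s := by
    intro s _
    have h1 : HasFDerivAt (gradient f) (fderiv ℝ (gradient f) (a + s • (b - a)))
        (a + s • (b - a)) :=
      (((aux_grad_cd1 hf).differentiable (by norm_num)) _).hasFDerivAt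
    have h2 : HasDerivAt (fun s : ℝ => a + s • (b - a)) (b - a) s := by
      simpa using ((hasDerivAt_id s).smul_const (b - a)).const_add a
    exact h1.comp_hasDerivAt s h2
  have hint : IntervalIntegrable
      (fun s : ℝ => fderiv ℝ (gradient f) (a + s • (b - a)) (b - a)) volume 0 1 :=
    (hcont.clm_apply continuous_const).intervalIntegrable 0 1
  rw [intervalIntegral.integral_eq_sub_of_hasDerivAt hderiv hint]
  simp

-- quadratic form of the averaged Hessian along a segment
private lemma aux_int_quad {f : E → ℝ} (hf : ContDiff ℝ 2 f) (a b u v : E) :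
    ⟪u, (∫ s in (0:ℝ)..1, fderiv ℝ (gradient f) (a + s • (b - a))) v⟫
      = ∫ s in (0:ℝ)..1, ⟪u, fderiv ℝ (gradient f) (a + s • (b - a)) v⟫ := by
  have hcont : Continuous (fun s : ℝ => fderiv ℝ (gradient f) (a + s • (b - a))) :=
    (aux_hess_cont hf).comp (aux_line_cont a b)
  rw [aux_int_apply hcont, aux_inner_int (hcont.clm_apply continuous_const)]

private lemma aux_int_lo {f : E → ℝ} (hf : ContDiff ℝ 2 f) {μ : ℝ}
    (hlo : ∀ x w, μ * ‖w‖ ^ 2 ≤ ⟪w, fderiv ℝ (gradient f) x w⟫) (a b v : E) :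
    μ * ‖v‖ ^ 2 ≤ ⟪v, (∫ s in (0:ℝ)..1, fderiv ℝ (gradient f) (a + s • (b - a))) v⟫ := by
  rw [aux_int_quad hf]
  have hcont : Continuous (fun s : ℝ =>
      ⟪v, fderiv ℝ (gradient f) (a + s • (b - a)) v⟫) :=
    continuous_const.inner
      ((((aux_hess_cont hf).comp (aux_line_cont a b)).clm_apply continuous_const))
  calc μ * ‖v‖ ^ 2 = ∫ s in (0:ℝ)..1, μ * ‖v‖ ^ 2 := by simp
    _ ≤ _ := by
        apply intervalIntegral.integral_mono_on (by norm_num)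
          intervalIntegrable_const (hcont.intervalIntegrable 0 1)
        intro s _; exact hlo _ v

private lemma aux_int_hi {f : E → ℝ} (hf : ContDiff ℝ 2 f) {L : ℝ}
    (hhi : ∀ x w, ⟪w, fderiv ℝ (gradient f) x w⟫ ≤ L * ‖w‖ ^ 2) (a b v : E) :
    ⟪v, (∫ s in (0:ℝ)..1, fderiv ℝ (gradient f) (a + s • (b - a))) v⟫ ≤ L * ‖v‖ ^ 2 := by
  rw [aux_int_quad hf]
  have hcont : Continuous (fun s : ℝ =>
      ⟪v, fderiv ℝ (gradient f) (a + s • (b - a)) v⟫) :=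
    continuous_const.inner
      ((((aux_hess_cont hf).comp (aux_line_cont a b)).clm_apply continuous_const))
  calc (∫ s in (0:ℝ)..1, ⟪v, fderiv ℝ (gradient f) (a + s • (b - a)) v⟫)
      ≤ ∫ s in (0:ℝ)..1, L * ‖v‖ ^ 2 := by
        apply intervalIntegral.integral_mono_on (by norm_num)
          (hcont.intervalIntegrable 0 1) intervalIntegrable_const
        intro s _; exact hhi _ v
    _ = L * ‖v‖ ^ 2 := by simp

private lemma aux_int_symm {f : E → ℝ} (hf : ContDiff ℝ 2 f) (a b u v : E) :
    ⟪(∫ s in (0:ℝ)..1, fderiv ℝ (gradient f) (a + s • (b - a))) u, v⟫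
      = ⟪u, (∫ s in (0:ℝ)..1, fderiv ℝ (gradient f) (a + s • (b - a))) v⟫ := by
  rw [real_inner_comm, aux_int_quad hf, aux_int_quad hf]
  congr 1; funext s
  rw [real_inner_comm]
  exact aux_hess_symm hf _ u v

private lemma aux_cs (T : E →L[ℝ] E) (hsym : ∀ x y : E, ⟪T x, y⟫ = ⟪x, T y⟫)
    (hpsd : ∀ x : E, 0 ≤ ⟪T x, x⟫) (u w : E) :
    ⟪T u, w⟫ ^ 2 ≤ ⟪T u, u⟫ * ⟪T w, w⟫ := by
  have h : ∀ t : ℝ, 0 ≤ ⟪T w, w⟫ * (t * t) + (2 * ⟪T u, w⟫) * t + ⟪T u, u⟫ := by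
    intro t
    have h0 := hpsd (u + t • w)
    have h1 : ⟪T w, u⟫ = ⟪T u, w⟫ := by rw [hsym, real_inner_comm]
    rw [map_add, ContinuousLinearMap.map_smul] at h0
    simp only [inner_add_left, inner_add_right, real_inner_smul_left,
      real_inner_smul_right] at h0
    rw [h1] at h0
    nlinarith [h0]
  have hd := discrim_le_zero h
  rw [discrim] at hd
  nlinarith [hd]

private lemma aux_contract {μ L η : ℝ} (hμ : 0 < μ) (hμL : μ ≤ L) (hη : 0 < η)
    (hη2 : η * (L + μ) ≤ 2) (A : E →L[ℝ] E)
    (hsym : ∀ x y : E, ⟪A x, y⟫ = ⟪x, A y⟫)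
    (hlo : ∀ v : E, μ * ‖v‖ ^ 2 ≤ ⟪v, A v⟫)
    (hhi : ∀ v : E, ⟪v, A v⟫ ≤ L * ‖v‖ ^ 2) (v : E) :
    ‖v - η • A v‖ ≤ (1 - η * μ) * ‖v‖ := by
  set T : E →L[ℝ] E := A - μ • ContinuousLinearMap.id ℝ E with hT
  have hTapp : ∀ x : E, T x = A x - μ • x := fun x => rfl
  have hTsym : ∀ x y : E, ⟪T x, y⟫ = ⟪x, T y⟫ := by
    intro x y
    simp only [hTapp, inner_sub_left, inner_sub_right, real_inner_smul_left,
      real_inner_smul_right, hsym x y]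
  have hTpsd : ∀ x : E, 0 ≤ ⟪T x, x⟫ := by
    intro x
    have := hlo x
    simp only [hTapp, inner_sub_left, real_inner_smul_left, real_inner_self_eq_norm_sq]
    rw [real_inner_comm] at this
    nlinarith
  have hThi : ∀ x : E, ⟪T x, x⟫ ≤ (L - μ) * ‖x‖ ^ 2 := by
    intro x
    have := hhi x
    simp only [hTapp, inner_sub_left, real_inner_smul_left, real_inner_self_eq_norm_sq]
    rw [real_inner_comm] at this
    nlinarith
  have hkey : ‖T v‖ ^ 2 ≤ (L - μ) * ⟪T v, v⟫ := by
    have hcs := aux_cs T hTsym hTpsd v (T v)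
    have h2 := hThi (T v)
    have h3 : ⟪T v, T v⟫ = ‖T v‖ ^ 2 := real_inner_self_eq_norm_sq _
    rw [h3] at hcs
    rcases eq_or_lt_of_le (norm_nonneg (T v)) with h0 | h0
    · have hz : ‖T v‖ ^ 2 = 0 := by rw [← h0]; ring
      rw [hz]
      exact mul_nonneg (sub_nonneg.2 hμL) (hTpsd v)
    · have h4 : 0 < ‖T v‖ ^ 2 := by positivity
      have h5 : ⟪T v, v⟫ * ⟪T (T v), T v⟫ ≤ ⟪T v, v⟫ * ((L - μ) * ‖T v‖ ^ 2) :=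
        mul_le_mul_of_nonneg_left h2 (hTpsd v)
      nlinarith [hTpsd v, hTpsd (T v)]
  have hAv : ‖A v‖ ^ 2 ≤ (L + μ) * ⟪v, A v⟫ - μ * L * ‖v‖ ^ 2 := by
    have h5 : A v = T v + μ • v := by rw [hTapp]; abel
    have h6 : ‖A v‖ ^ 2 = ‖T v‖ ^ 2 + 2 * (μ * ⟪T v, v⟫) + μ ^ 2 * ‖v‖ ^ 2 := by
      rw [h5, @norm_add_sq_real, real_inner_smul_right, norm_smul,
        Real.norm_eq_abs, mul_pow, sq_abs]
    have h7 : ⟪T v, v⟫ = ⟪v, A v⟫ - μ * ‖v‖ ^ 2 := by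
      rw [hTapp, inner_sub_left, real_inner_smul_left, real_inner_self_eq_norm_sq,
        real_inner_comm]
    nlinarith [hkey, h7, h6]
  have hsmul : ‖η • A v‖ ^ 2 = η ^ 2 * ‖A v‖ ^ 2 := by
    rw [norm_smul, Real.norm_eq_abs, mul_pow, sq_abs]
  have hsq : ‖v - η • A v‖ ^ 2 ≤ ((1 - η * μ) * ‖v‖) ^ 2 := by
    rw [@norm_sub_sq_real, real_inner_smul_right, hsmul]
    have hq := hlo v
    have hq2 := hhi v
    have hfac : 0 ≤ η * (2 - η * (L + μ)) * (⟪v, A v⟫ - μ * ‖v‖ ^ 2) := by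
      apply mul_nonneg (mul_nonneg hη.le (by nlinarith)) (sub_nonneg.2 hq)
    nlinarith [mul_le_mul_of_nonneg_left hAv (sq_nonneg η), hfac]
  have h1μ : 0 ≤ 1 - η * μ := by nlinarith
  nlinarith [norm_nonneg (v - η • A v), norm_nonneg v, hsq,
    mul_nonneg h1μ (norm_nonneg v)]

private lemma aux_step {f : E → ℝ} (hf : ContDiff ℝ 2 f) {μ L η : ℝ}
    (hμ : 0 < μ) (hμL : μ ≤ L) (hη : 0 < η) (hη2 : η * (L + μ) ≤ 2)
    (hlo : ∀ x w, μ * ‖w‖ ^ 2 ≤ ⟪w, fderiv ℝ (gradient f) x w⟫)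
    (hhi : ∀ x w, ⟪w, fderiv ℝ (gradient f) x w⟫ ≤ L * ‖w‖ ^ 2) (a b : E) :
    ‖(b - a) - η • (gradient f b - gradient f a)‖ ≤ (1 - η * μ) * ‖b - a‖ := by
  rw [← aux_ftc hf a b]
  exact aux_contract hμ hμL hη hη2 _ (aux_int_symm hf a b)
    (aux_int_lo hf hlo a b) (aux_int_hi hf hhi a b) (b - a)

section Family
variable {ι : Type*} {s : Finset ι} {f : ι → E → ℝ} {c : ℝ}

private lemma aux_fam_grad (hf : ∀ i ∈ s, ContDiff ℝ 2 (f i)) (x : E) :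
    gradient (fun y => c * ∑ i ∈ s, f i y) x = c • ∑ i ∈ s, gradient (f i) x := by
  have hdiff : ∀ i ∈ s, DifferentiableAt ℝ (f i) x := fun i hi =>
    ((hf i hi).differentiable (by norm_num)).differentiableAt
  have hsum : DifferentiableAt ℝ (fun y => ∑ i ∈ s, f i y) x :=
    DifferentiableAt.fun_sum hdiff
  show (toDual ℝ E).symm (fderiv ℝ (fun y => c * ∑ i ∈ s, f i y) x) = _
  rw [fderiv_const_mul hsum c, fderiv_fun_sum hdiff, _root_.map_smul, map_sum]
  rfl

private lemma aux_fam_cd (hf : ∀ i ∈ s, ContDiff ℝ 2 (f i)) :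
    ContDiff ℝ 2 (fun y => c * ∑ i ∈ s, f i y) :=
  contDiff_const.mul (ContDiff.sum hf)

private lemma aux_fam_hess (hf : ∀ i ∈ s, ContDiff ℝ 2 (f i)) (x : E) :
    fderiv ℝ (gradient (fun y => c * ∑ i ∈ s, f i y)) x
      = c • ∑ i ∈ s, fderiv ℝ (gradient (f i)) x := by
  have h1 : gradient (fun y => c * ∑ i ∈ s, f i y)
      = fun x => c • ∑ i ∈ s, gradient (f i) x := funext (aux_fam_grad hf)
  have hdiff : ∀ i ∈ s, DifferentiableAt ℝ (fun y => gradient (f i) y) x := fun i hi =>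
    ((aux_grad_cd1 (hf i hi)).differentiable (by norm_num)).differentiableAt
  rw [h1, fderiv_fun_const_smul (DifferentiableAt.fun_sum hdiff) c, fderiv_fun_sum hdiff]

private lemma aux_fam_lo {μ : ℝ} (hf : ∀ i ∈ s, ContDiff ℝ 2 (f i))
    (hlo : ∀ i ∈ s, ∀ x v : E, μ * ‖v‖ ^ 2 ≤ ⟪v, fderiv ℝ (gradient (f i)) x v⟫)
    (hcs : c * s.card = 1) (hc0 : 0 ≤ c) (x v : E) :
    μ * ‖v‖ ^ 2 ≤ ⟪v, fderiv ℝ (gradient (fun y => c * ∑ i ∈ s, f i y)) x v⟫ := by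
  rw [aux_fam_hess hf]
  simp only [ContinuousLinearMap.smul_apply, ContinuousLinearMap.coe_sum',
    Finset.sum_apply, real_inner_smul_right, inner_sum]
  have h1 : (s.card : ℝ) * (μ * ‖v‖ ^ 2) ≤ ∑ i ∈ s, ⟪v, fderiv ℝ (gradient (f i)) x v⟫ := by
    rw [← nsmul_eq_mul]
    exact Finset.card_nsmul_le_sum s _ _ (fun i hi => hlo i hi x v)
  calc μ * ‖v‖ ^ 2 = c * ((s.card : ℝ) * (μ * ‖v‖ ^ 2)) := by
        rw [← mul_assoc, hcs, one_mul]
    _ ≤ _ := mul_le_mul_of_nonneg_left h1 hc0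

private lemma aux_fam_hi {L : ℝ} (hf : ∀ i ∈ s, ContDiff ℝ 2 (f i))
    (hhi : ∀ i ∈ s, ∀ x v : E, ⟪v, fderiv ℝ (gradient (f i)) x v⟫ ≤ L * ‖v‖ ^ 2)
    (hcs : c * s.card = 1) (hc0 : 0 ≤ c) (x v : E) :
    ⟪v, fderiv ℝ (gradient (fun y => c * ∑ i ∈ s, f i y)) x v⟫ ≤ L * ‖v‖ ^ 2 := by
  rw [aux_fam_hess hf]
  simp only [ContinuousLinearMap.smul_apply, ContinuousLinearMap.coe_sum',
    Finset.sum_apply, real_inner_smul_right, inner_sum]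
  have h1 : ∑ i ∈ s, ⟪v, fderiv ℝ (gradient (f i)) x v⟫ ≤ (s.card : ℝ) * (L * ‖v‖ ^ 2) := by
    rw [← nsmul_eq_mul]
    exact Finset.sum_le_card_nsmul s _ _ (fun i hi => hhi i hi x v)
  calc c * ∑ i ∈ s, ⟪v, fderiv ℝ (gradient (f i)) x v⟫
      ≤ c * ((s.card : ℝ) * (L * ‖v‖ ^ 2)) := mul_le_mul_of_nonneg_left h1 hc0
    _ = L * ‖v‖ ^ 2 := by rw [← mul_assoc, hcs, one_mul]

end Family

end AuxDeltaGrad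

set_option maxHeartbeats 1000000 in
theorem stmt_13 (p n r : ℕ) (hr : 1 ≤ r) (hrn : r < n) (μ L η c₀ ξ c₂ M₁ C : ℝ)
    (hμ : 0 < μ) (hμL : μ ≤ L) (hc₀ : 0 ≤ c₀)
    (Fi : Fin n → EuclideanSpace ℝ (Fin p) → ℝ) (hFi : ∀ i, ContDiff ℝ 2 (Fi i))
    (hlow : ∀ i, ∀ x v : EuclideanSpace ℝ (Fin p),
      μ * ‖v‖ ^ 2 ≤ ⟪v, fderiv ℝ (gradient (Fi i)) x v⟫)
    (hup : ∀ i, ∀ x v : EuclideanSpace ℝ (Fin p),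
      ⟪v, fderiv ℝ (gradient (Fi i)) x v⟫ ≤ L * ‖v‖ ^ 2)
    (hHLip : ∀ i, ∀ x y : EuclideanSpace ℝ (Fin p),
      ‖fderiv ℝ (gradient (Fi i)) x - fderiv ℝ (gradient (Fi i)) y‖ ≤ c₀ * ‖x - y‖)
    (F : EuclideanSpace ℝ (Fin p) → ℝ) (hF : ∀ x, F x = (1 / n : ℝ) * ∑ i, Fi i x)
    (R : Finset (Fin n)) (hR : R.card = r)
    (hη : 0 < η) (hη2 : η ≤ 2 / (L + μ))
    (w u iw : ℕ → EuclideanSpace ℝ (Fin p)) (h0wu : w 0 = u 0) (h0ui : u 0 = iw 0)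
    (hw : ∀ t, w (t + 1) = w t - η • gradient F (w t))
    (hu : ∀ t, u (t + 1) = u t - (η / ((n : ℝ) - r)) • ∑ i ∈ Rᶜ, gradient (Fi i) (u t))
    (B : ℕ → EuclideanSpace ℝ (Fin p) →L[ℝ] EuclideanSpace ℝ (Fin p))
    (hiw : ∀ t, iw (t + 1) = iw t - (η / ((n : ℝ) - r)) •
        ((n : ℝ) • (B t (iw t - w t) + gradient F (w t))
          - ∑ i ∈ R, gradient (Fi i) (iw t)))
    (hBsymm : ∀ t, ∀ x y : EuclideanSpace ℝ (Fin p), ⟪B t x, y⟫ = ⟪x, B t y⟫)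
    (hB : ∀ t, ‖B t - ∫ x in (0:ℝ)..1,
        fderiv ℝ (gradient F) (w t + x • (iw t - w t))‖ ≤ ξ)
    (hc : ∀ i t, ‖gradient (Fi i) (u t)‖ ≤ c₂)
    (hM₁ : M₁ = 2 * c₂ / μ)
    (hC : C = μ - ((n : ℝ) / ((n : ℝ) - r)) * ξ - c₀ * M₁ * r / (2 * n))
    (hC0 : 0 < η * C) (hC1 : η * C < 1) :
    ∀ t, ‖iw t - u t‖ ≤ M₁ * r * ξ / (C * ((n : ℝ) - r)) := by
  have hn0 : 0 < n := lt_of_le_of_lt (Nat.zero_le r) hrn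
  obtain ⟨ν, hνdef⟩ : ∃ ν : ℝ, (n : ℝ) = ν := ⟨(n : ℝ), rfl⟩
  rw [hνdef] at hF hu hiw hC ⊢
  have hν0 : (0:ℝ) < ν := by rw [← hνdef]; exact_mod_cast hn0
  have hrν : (r : ℝ) < ν := by rw [← hνdef]; exact_mod_cast hrn
  have hm0 : (0:ℝ) < ν - r := by linarith
  have hr0 : (0:ℝ) ≤ r := Nat.cast_nonneg r
  have hc₂0 : 0 ≤ c₂ := le_trans (norm_nonneg _) (hc ⟨0, hn0⟩ 0)
  have hM₁0 : 0 ≤ M₁ := by rw [hM₁]; positivity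
  have hξ0 : 0 ≤ ξ := le_trans (norm_nonneg _) (hB 0)
  have hLμ : 0 < L + μ := by linarith
  have hη2' : η * (L + μ) ≤ 2 := by
    rw [le_div_iff₀ hLμ] at hη2; exact hη2
  have hημ1 : η * μ ≤ 1 := by nlinarith
  have hC0' : 0 < C := by nlinarith
  have hμM₁ : μ * M₁ = 2 * c₂ := by rw [hM₁]; field_simp
  -- facts about F
  have hFall : ∀ i ∈ (Finset.univ : Finset (Fin n)), ContDiff ℝ 2 (Fi i) := fun i _ => hFi i
  have hFeq : F = fun y => (1 / ν) * ∑ i, Fi i y := funext hF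
  have hcF : (1 / ν) * (((Finset.univ : Finset (Fin n)).card : ℕ) : ℝ) = 1 := by
    rw [Finset.card_univ, Fintype.card_fin, hνdef]; field_simp
  have hFcd : ContDiff ℝ 2 F := by rw [hFeq]; exact aux_fam_cd hFall
  have hFlo : ∀ x v : EuclideanSpace ℝ (Fin p),
      μ * ‖v‖ ^ 2 ≤ ⟪v, fderiv ℝ (gradient F) x v⟫ := by
    intro x v; rw [hFeq]
    exact aux_fam_lo hFall (fun i _ => hlow i) hcF (one_div_nonneg.2 hν0.le) x v
  have hFhi : ∀ x v : EuclideanSpace ℝ (Fin p),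
      ⟪v, fderiv ℝ (gradient F) x v⟫ ≤ L * ‖v‖ ^ 2 := by
    intro x v; rw [hFeq]
    exact aux_fam_hi hFall (fun i _ => hup i) hcF (one_div_nonneg.2 hν0.le) x v
  have hgF : ∀ y, gradient F y = (1 / ν) • ∑ i, gradient (Fi i) y := by
    intro y; rw [hFeq]; exact aux_fam_grad hFall y
  have hgFs : ∀ y, ν • gradient F y = ∑ i, gradient (Fi i) y := by
    intro y; rw [hgF y, smul_smul, mul_one_div, div_self hν0.ne', one_smul]
  -- facts about G, the leave-out average
  set G : EuclideanSpace ℝ (Fin p) → ℝ := fun y => (1 / (ν - r)) * ∑ i ∈ Rᶜ, Fi i y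
    with hGdef
  have hGall : ∀ i ∈ Rᶜ, ContDiff ℝ 2 (Fi i) := fun i _ => hFi i
  have hRc : (((Rᶜ : Finset (Fin n)).card : ℕ) : ℝ) = ν - r := by
    rw [Finset.card_compl, hR, Fintype.card_fin, Nat.cast_sub hrn.le, hνdef]
  have hcG : (1 / (ν - r)) * (((Rᶜ : Finset (Fin n)).card : ℕ) : ℝ) = 1 := by
    rw [hRc]; field_simp
  have hGcd : ContDiff ℝ 2 G := by rw [hGdef]; exact aux_fam_cd hGall
  have hGlo : ∀ x v : EuclideanSpace ℝ (Fin p),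
      μ * ‖v‖ ^ 2 ≤ ⟪v, fderiv ℝ (gradient G) x v⟫ := by
    intro x v; rw [hGdef]
    exact aux_fam_lo hGall (fun i _ => hlow i) hcG (one_div_nonneg.2 hm0.le) x v
  have hGhi : ∀ x v : EuclideanSpace ℝ (Fin p),
      ⟪v, fderiv ℝ (gradient G) x v⟫ ≤ L * ‖v‖ ^ 2 := by
    intro x v; rw [hGdef]
    exact aux_fam_hi hGall (fun i _ => hup i) hcG (one_div_nonneg.2 hm0.le) x v
  have hsumG : ∀ y, ∑ i ∈ Rᶜ, gradient (Fi i) y = (ν - r) • gradient G y := by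
    intro y
    rw [hGdef, aux_fam_grad hGall y, smul_smul, mul_one_div, div_self hm0.ne', one_smul]
  -- contraction steps
  have hstepF := fun a b => aux_step hFcd hμ hμL hη hη2' hFlo hFhi a b
  have hstepG := fun a b => aux_step hGcd hμ hμL hη hη2' hGlo hGhi a b
  -- norms of gradient sums
  have hsums : ∀ (s : Finset (Fin n)) (t : ℕ),
      ‖∑ i ∈ s, gradient (Fi i) (u t)‖ ≤ ((s.card : ℕ) : ℝ) * c₂ := by
    intro s t
    calc ‖∑ i ∈ s, gradient (Fi i) (u t)‖ ≤ ∑ i ∈ s, ‖gradient (Fi i) (u t)‖ :=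
          norm_sum_le _ _
      _ ≤ ((s.card : ℕ) : ℝ) * c₂ := by
          rw [← nsmul_eq_mul]
          exact Finset.sum_le_card_nsmul s _ _ (fun i _ => hc i t)
  -- the bound on ‖w t - u t‖
  have hd : ∀ t, ‖w t - u t‖ ≤ M₁ * r / ν := by
    intro t
    induction t with
    | zero =>
      rw [h0wu, sub_self, norm_zero]
      exact div_nonneg (mul_nonneg hM₁0 hr0) hν0.le
    | succ t ih =>
      have hid : w (t + 1) - u (t + 1)
          = ((w t - u t) - η • (gradient F (w t) - gradient F (u t)))
            + ((η / (ν - r)) • (∑ i ∈ Rᶜ, gradient (Fi i) (u t))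
              - η • gradient F (u t)) := by
        rw [hw t, hu t]; module
      have hEeq : (η / (ν - r)) • (∑ i ∈ Rᶜ, gradient (Fi i) (u t))
            - η • gradient F (u t)
          = (η / (ν - r) - η / ν) • (∑ i ∈ Rᶜ, gradient (Fi i) (u t))
            - (η / ν) • (∑ i ∈ R, gradient (Fi i) (u t)) := by
        rw [hgF (u t), ← Finset.sum_add_sum_compl R (fun i => gradient (Fi i) (u t))]
        module
      have ha : η / (ν - r) - η / ν = η * r / ((ν - r) * ν) := by
        field_simp; ring
      have ha0 : 0 ≤ η / (ν - r) - η / ν := by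
        rw [ha]; positivity
      have hb0 : 0 ≤ η / ν := by positivity
      have hScb : ‖∑ i ∈ Rᶜ, gradient (Fi i) (u t)‖ ≤ (ν - r) * c₂ := by
        have := hsums Rᶜ t; rwa [hRc] at this
      have hSRb : ‖∑ i ∈ R, gradient (Fi i) (u t)‖ ≤ (r : ℝ) * c₂ := by
        have := hsums R t; rwa [hR] at this
      have hE2 : ‖(η / (ν - r)) • (∑ i ∈ Rᶜ, gradient (Fi i) (u t))
            - η • gradient F (u t)‖ ≤ 2 * η * r * c₂ / ν := by
        rw [hEeq]
        calc ‖(η / (ν - r) - η / ν) • (∑ i ∈ Rᶜ, gradient (Fi i) (u t))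
              - (η / ν) • (∑ i ∈ R, gradient (Fi i) (u t))‖
            ≤ ‖(η / (ν - r) - η / ν) • (∑ i ∈ Rᶜ, gradient (Fi i) (u t))‖
              + ‖(η / ν) • (∑ i ∈ R, gradient (Fi i) (u t))‖ := norm_sub_le _ _
          _ = (η / (ν - r) - η / ν) * ‖∑ i ∈ Rᶜ, gradient (Fi i) (u t)‖
              + (η / ν) * ‖∑ i ∈ R, gradient (Fi i) (u t)‖ := by
              rw [norm_smul, norm_smul, Real.norm_eq_abs, Real.norm_eq_abs,
                abs_of_nonneg ha0, abs_of_nonneg hb0]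
          _ ≤ (η / (ν - r) - η / ν) * ((ν - r) * c₂) + (η / ν) * ((r : ℝ) * c₂) :=
              add_le_add (mul_le_mul_of_nonneg_left hScb ha0)
                (mul_le_mul_of_nonneg_left hSRb hb0)
          _ = 2 * η * r * c₂ / ν := by field_simp; ring
      calc ‖w (t + 1) - u (t + 1)‖
          ≤ ‖(w t - u t) - η • (gradient F (w t) - gradient F (u t))‖
            + ‖(η / (ν - r)) • (∑ i ∈ Rᶜ, gradient (Fi i) (u t))
              - η • gradient F (u t)‖ := by
            rw [hid]; exact norm_add_le _ _
        _ ≤ (1 - η * μ) * ‖w t - u t‖ + 2 * η * r * c₂ / ν :=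
            add_le_add (hstepF (u t) (w t)) hE2
        _ ≤ (1 - η * μ) * (M₁ * r / ν) + 2 * η * r * c₂ / ν := by
            have := mul_le_mul_of_nonneg_left ih (by linarith : (0:ℝ) ≤ 1 - η * μ)
            linarith
        _ = M₁ * r / ν := by
            linear_combination (-(η * r / ν)) * hμM₁
  -- main induction
  have hK0 : 0 ≤ M₁ * r * ξ / (C * (ν - r)) :=
    div_nonneg (mul_nonneg (mul_nonneg hM₁0 hr0) hξ0) (le_of_lt (mul_pos hC0' hm0))
  have hKC : C * (M₁ * r * ξ / (C * (ν - r))) = M₁ * r * ξ / (ν - r) := by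
    field_simp
  have hCge : C ≤ μ - (ν / (ν - r)) * ξ := by
    rw [hC]
    have h0 : 0 ≤ c₀ * M₁ * (r : ℝ) / (2 * ν) := by positivity
    linarith
  intro t
  induction t with
  | zero =>
    rw [← h0ui, sub_self, norm_zero]; exact hK0
  | succ t ih =>
    set Hbar := ∫ x in (0:ℝ)..1, fderiv ℝ (gradient F) (w t + x • (iw t - w t))
      with hHbar
    have hHx : Hbar (iw t - w t) = gradient F (iw t) - gradient F (w t) :=
      aux_ftc hFcd (w t) (iw t)
    have hsplit : ∑ i ∈ R, gradient (Fi i) (iw t)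
        = ν • gradient F (iw t) - ∑ i ∈ Rᶜ, gradient (Fi i) (iw t) := by
      rw [eq_sub_iff_add_eq, Finset.sum_add_sum_compl, hgFs]
    have hmain : iw (t + 1) - u (t + 1)
        = ((iw t - u t) - (η / (ν - r)) • (∑ i ∈ Rᶜ, gradient (Fi i) (iw t)
            - ∑ i ∈ Rᶜ, gradient (Fi i) (u t)))
          - (η * ν / (ν - r)) • ((B t - Hbar) (iw t - w t)) := by
      rw [hiw t, hu t, ContinuousLinearMap.sub_apply, hHx, hsplit]
      module
    have hG1 : (η / (ν - r)) • (∑ i ∈ Rᶜ, gradient (Fi i) (iw t)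
          - ∑ i ∈ Rᶜ, gradient (Fi i) (u t))
        = η • (gradient G (iw t) - gradient G (u t)) := by
      rw [hsumG (iw t), hsumG (u t), ← smul_sub, smul_smul]
      congr 1
      field_simp
    have hΔ : ‖(B t - Hbar) (iw t - w t)‖
        ≤ ξ * (‖iw t - u t‖ + ‖w t - u t‖) := by
      calc ‖(B t - Hbar) (iw t - w t)‖ ≤ ‖B t - Hbar‖ * ‖iw t - w t‖ :=
            ContinuousLinearMap.le_opNorm _ _
        _ ≤ ξ * ‖iw t - w t‖ := mul_le_mul_of_nonneg_right (hB t) (norm_nonneg _)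
        _ ≤ ξ * (‖iw t - u t‖ + ‖w t - u t‖) := by
            have h1 : iw t - w t = (iw t - u t) - (w t - u t) := by abel
            rw [h1]
            exact mul_le_mul_of_nonneg_left (norm_sub_le _ _) hξ0
    have hco : 0 ≤ η * ν / (ν - r) := by positivity
    calc ‖iw (t + 1) - u (t + 1)‖
        ≤ ‖(iw t - u t) - (η / (ν - r)) • (∑ i ∈ Rᶜ, gradient (Fi i) (iw t)
            - ∑ i ∈ Rᶜ, gradient (Fi i) (u t))‖
          + ‖(η * ν / (ν - r)) • ((B t - Hbar) (iw t - w t))‖ := by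
          rw [hmain]; exact norm_sub_le _ _
      _ ≤ (1 - η * μ) * ‖iw t - u t‖
          + (η * ν / (ν - r)) * (ξ * (‖iw t - u t‖ + ‖w t - u t‖)) := by
          apply add_le_add
          · rw [hG1]; exact hstepG (u t) (iw t)
          · rw [norm_smul, Real.norm_eq_abs, abs_of_nonneg hco]
            exact mul_le_mul_of_nonneg_left hΔ hco
      _ ≤ (1 - η * μ) * (M₁ * r * ξ / (C * (ν - r)))
          + (η * ν / (ν - r)) * (ξ * (M₁ * r * ξ / (C * (ν - r)) + M₁ * r / ν)) := by
          have h2 := mul_le_mul_of_nonneg_left ih (by linarith : (0:ℝ) ≤ 1 - η * μ)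
          have h3 : ξ * (‖iw t - u t‖ + ‖w t - u t‖)
              ≤ ξ * (M₁ * r * ξ / (C * (ν - r)) + M₁ * r / ν) :=
            mul_le_mul_of_nonneg_left (add_le_add ih (hd t)) hξ0
          have h4 := mul_le_mul_of_nonneg_left h3 hco
          linarith
      _ ≤ M₁ * r * ξ / (C * (ν - r)) := by
          have hstep2 : (η * ν / (ν - r)) * (ξ * (M₁ * r / ν))
              = η * (M₁ * r * ξ / (ν - r)) := by
            field_simp
          calc (1 - η * μ) * (M₁ * r * ξ / (C * (ν - r)))
              + (η * ν / (ν - r)) * (ξ * (M₁ * r * ξ / (C * (ν - r)) + M₁ * r / ν))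
              = (M₁ * r * ξ / (C * (ν - r)))
                - (η * (M₁ * r * ξ / (C * (ν - r)))) * (μ - (ν / (ν - r)) * ξ)
                + (η * ν / (ν - r)) * (ξ * (M₁ * r / ν)) := by ring
            _ ≤ (M₁ * r * ξ / (C * (ν - r)))
                - (η * (M₁ * r * ξ / (C * (ν - r)))) * C
                + (η * ν / (ν - r)) * (ξ * (M₁ * r / ν)) := by
                have := mul_le_mul_of_nonneg_left hCge
                  (mul_nonneg hη.le hK0)
                linarith
            _ = (M₁ * r * ξ / (C * (ν - r)))
                - η * (C * (M₁ * r * ξ / (C * (ν - r))))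
                + η * (M₁ * r * ξ / (ν - r)) := by rw [hstep2]; ring
            _ = M₁ * r * ξ / (C * (ν - r)) := by rw [hKC]; ring
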